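/- arXiv:2511.05802 — 5 statements merged into one kernel-verified Lean document; each statement's English description precedes it below -/
import Mathlib

section
/- Let K ≥ 1 be an integer. Let A : ℕ → Finset (Fin K) be a sequence of active sets with A(0) the full set of K arms and A(t+1) ⊆ A(t) for every t. Define pull counts n : ℕ → Fin K → ℕ by n(0)(x) = 0 and n(t+1)(x) = n(t)(x) + 1 if x = a(t) and n(t+1)(x) = n(t)(x) otherwise, where a(t) ∈ A(t) is any arm satisfying n(t)(a(t)) ≤ n(t)(b) for all b ∈ A(t) (i.e., at each round an arm with the fewest pulls among the active arms is pulled). Then for every t and every pair of arms x, y ∈ A(t), it holds that n(t)(x) ≤ n(t)(y) + 1. -/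
/-- Appendix Lemma 4: if at each round the algorithm pulls an active arm with the
fewest pulls among active arms, and active sets are nested, then at every round the
pull counts of any two active arms differ by at most one. -/
theorem stmt_3 (K : ℕ) (hK : 1 ≤ K)
    (A : ℕ → Finset (Fin K)) (a : ℕ → Fin K) (n : ℕ → Fin K → ℕ)
    (hA0 : A 0 = Finset.univ)
    (hAsub : ∀ t, A (t + 1) ⊆ A t)
    (ha : ∀ t, a t ∈ A t)
    (hmin : ∀ t, ∀ b ∈ A t, n t (a t) ≤ n t b)
    (hn0 : ∀ x, n 0 x = 0)
    (hnsucc : ∀ t x, n (t + 1) x = if x = a t then n t x + 1 else n t x) :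
    ∀ t, ∀ x ∈ A t, ∀ y ∈ A t, n t x ≤ n t y + 1 := by
  intro t
  induction t with
  | zero => intro x _ y _; simp [hn0]
  | succ t ih =>
    intro x hx y hy
    have hx' := hAsub t hx
    have hy' := hAsub t hy
    have h1 : n t x ≤ n t y + 1 := ih x hx' y hy'
    rw [hnsucc, hnsucc]
    by_cases hxa : x = a t <;> by_cases hya : y = a t <;>
      [rw [if_pos hxa, if_pos hya]; rw [if_pos hxa, if_neg hya];
       rw [if_neg hxa, if_pos hya]; rw [if_neg hxa, if_neg hya]]
    · omega
    · have h2 : n t x ≤ n t y := hxa ▸ hmin t y hy'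
      omega
    · omega
    · omega
end

section
/- Let A be a nonempty finite set, let μ, μ̂ : A → ℝ, let c : A → ℝ and C ≥ 0 be reals such that |μ̂(b) − μ(b)| ≤ c(b) ≤ C for all b ∈ A. Let a* ∈ A satisfy μ(a*) ≥ μ(a) for all a ∈ A, and let â ∈ A be a maximizer of μ̂ over A. Define A' = {a ∈ A : μ̂(â) − μ̂(a) ≤ 2·C}. Then a* ∈ A', and every a ∈ A' satisfies μ(a*) − μ(a) ≤ 4·C. -/
/-- Base case (i = 1) of Appendix Lemma 6: the optimal arm `a*` survives the
elimination step of LexElim-In, and every retained arm has gap at most `4 C`. -/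
theorem stmt_6 {A : Type*} [Fintype A] [Nonempty A]
    (μ μhat : A → ℝ) (c : A → ℝ) (C : ℝ) (hC : 0 ≤ C)
    (hconf : ∀ b : A, |μhat b - μ b| ≤ c b) (hcC : ∀ b : A, c b ≤ C)
    (astar : A) (hopt : ∀ a : A, μ a ≤ μ astar)
    (ahat : A) (hahat : ∀ b : A, μhat b ≤ μhat ahat) :
    astar ∈ {a : A | μhat ahat - μhat a ≤ 2 * C} ∧
    ∀ a ∈ {a : A | μhat ahat - μhat a ≤ 2 * C}, μ astar - μ a ≤ 4 * C := by
  have key : ∀ b : A, |μhat b - μ b| ≤ C := fun b => (hconf b).trans (hcC b)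
  have h1 : ∀ b : A, μhat b - μ b ≤ C := fun b => (le_abs_self _).trans (key b)
  have h2 : ∀ b : A, μ b - μhat b ≤ C := fun b => by have := key b; rw [abs_sub_comm] at this; exact (le_abs_self _).trans this
  constructor
  · have := h1 ahat
    have := h2 astar
    have := hopt ahat
    simp only [Set.mem_setOf_eq]; linarith
  · intro a ha
    simp only [Set.mem_setOf_eq] at ha
    have := h2 astar
    have := h1 a
    have := hahat astar
    linarith
end

section
/- Let A be a nonempty finite set, let μ, μ̂ : A → ℝ, let C ≥ 0, λ ≥ 0 be reals, let i ≥ 2 be an integer, and set Λ' = 1 + λ + ⋯ + λ^{i−2}. Suppose |μ̂(b) − μ(b)| ≤ C for all b ∈ A, and let a* ∈ A satisfy μ(a) − μ(a*) ≤ 4·λ·Λ'·C for all a ∈ A. Let â ∈ A be a maximizer of μ̂ over A, and define A' = {a ∈ A : μ̂(â) − μ̂(a) ≤ (2 + 4·λ·Λ')·C}. Then a* ∈ A', and every a ∈ A' satisfies μ(a*) − μ(a) ≤ 4·(1 + λ·Λ')·C. -/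
/-- Inductive step of Appendix Lemma 6: with `Λ' = 1 + λ + ⋯ + λ^(i-2)`,
if all confidence errors are at most `C` and `μ a − μ a* ≤ 4 λ Λ' C` for all `a`,
then `a*` survives the level-`i` elimination step of LexElim-In and every retained
arm has gap at most `4 (1 + λ Λ') C` on objective `i`. -/
theorem stmt_7 {A : Type*} [Fintype A] [Nonempty A]
    (μ μhat : A → ℝ) (C : ℝ) (hC : 0 ≤ C)
    (lam : ℝ) (hlam : 0 ≤ lam) (i : ℕ) (hi : 2 ≤ i)
    (Λ' : ℝ) (hΛ' : Λ' = ∑ j ∈ Finset.range (i - 1), lam ^ j)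
    (hconf : ∀ b : A, |μhat b - μ b| ≤ C)
    (astar : A) (htrade : ∀ a : A, μ a - μ astar ≤ 4 * lam * Λ' * C)
    (ahat : A) (hahat : ∀ b : A, μhat b ≤ μhat ahat) :
    astar ∈ {a : A | μhat ahat - μhat a ≤ (2 + 4 * lam * Λ') * C} ∧
    ∀ a ∈ {a : A | μhat ahat - μhat a ≤ (2 + 4 * lam * Λ') * C},
      μ astar - μ a ≤ 4 * (1 + lam * Λ') * C := by
  have h1 := abs_le.1 (hconf astar)
  have h2 := abs_le.1 (hconf ahat)
  have h3 := htrade ahat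
  constructor
  · simp only [Set.mem_setOf_eq]
    linarith
  · intro a ha
    simp only [Set.mem_setOf_eq] at ha
    have h4 := abs_le.1 (hconf a)
    have h5 := hahat astar
    have h6 := htrade a
    linarith
end

section
/- Let A be a nonempty finite set, m ≥ 1 an integer, and λ ≥ 0, C ≥ 0 reals. For each i ∈ {1,…,m} let μ^i, μ̂^i : A → ℝ satisfy |μ̂^i(a) − μ^i(a)| ≤ C for all a ∈ A. Let a* ∈ A satisfy: (i) μ^1(a*) ≥ μ^1(a) for all a ∈ A; (ii) for every i ∈ {2,…,m} and every a ∈ A, μ^i(a) − μ^i(a*) ≤ λ · max over j ∈ {1,…,i−1} of (μ^j(a*) − μ^j(a)). Define A^0 = A and recursively, for i = 1,…,m, A^i = {a ∈ A^{i−1} : (max over b ∈ A^{i−1} of μ̂^i(b)) − μ̂^i(a) ≤ (2 + 4λ + 4λ² + ⋯ + 4λ^{i−1})·C}. Then for every i ∈ {1,…,m}: a* ∈ A^i, and every a ∈ A^i satisfies μ^i(a*) − μ^i(a) ≤ 4·(1 + λ + ⋯ + λ^{i−1})·C. -/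
/-- Deterministic content of Appendix Lemma 6 for LexElim-In: under the confidence
bounds and the lexicographic trade-off condition, at each level `i ∈ {1,…,m}` the
lex-optimal arm `a*` survives the nested elimination, and every surviving arm has
objective-`i` gap at most `4 (1 + λ + ⋯ + λ^(i-1)) C`. -/
theorem stmt_8 {A : Type*} [Fintype A] [Nonempty A]
    (m : ℕ) (hm : 1 ≤ m) (lam C : ℝ) (hlam : 0 ≤ lam) (hC : 0 ≤ C)
    (μ μhat : ℕ → A → ℝ)
    (hconf : ∀ i, 1 ≤ i → i ≤ m → ∀ a : A, |μhat i a - μ i a| ≤ C)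
    (astar : A)
    (hopt1 : ∀ a : A, μ 1 a ≤ μ 1 astar)
    (htrade : ∀ (i : ℕ) (hi2 : 2 ≤ i), i ≤ m → ∀ a : A,
      μ i a - μ i astar ≤
        lam * (Finset.Icc 1 (i - 1)).sup' (Finset.nonempty_Icc.mpr (by omega))
          (fun j => μ j astar - μ j a))
    (S : ℕ → Finset A)
    (hS0 : S 0 = Finset.univ)
    (hSrec : ∀ i, 1 ≤ i → i ≤ m → ∀ a : A,
      a ∈ S i ↔ a ∈ S (i - 1) ∧ ∀ b ∈ S (i - 1),
        μhat i b - μhat i a ≤ (2 + 4 * ∑ j ∈ Finset.Ico 1 i, lam ^ j) * C) :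
    ∀ i, 1 ≤ i → i ≤ m →
      astar ∈ S i ∧
      ∀ a ∈ S i, μ i astar - μ i a ≤ 4 * (∑ j ∈ Finset.range i, lam ^ j) * C := by
  have hsub : ∀ k, 1 ≤ k → k ≤ m → ∀ a : A, a ∈ S k → a ∈ S (k - 1) :=
    fun k h1 h2 a ha => ((hSrec k h1 h2 a).1 ha).1
  have hnest : ∀ k, k ≤ m → ∀ j, j ≤ k → ∀ a : A, a ∈ S k → a ∈ S j := by
    intro k
    induction k with
    | zero => intro _ j hj a ha; interval_cases j; exact ha
    | succ k ih =>
      intro hk j hj a ha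
      rcases Nat.eq_or_lt_of_le hj with h | h
      · subst h; exact ha
      · have hak : a ∈ S k := by
          have := hsub (k + 1) (by omega) hk a ha
          simpa using this
        exact ih (by omega) j (by omega) a hak
  intro i
  induction i using Nat.strong_induction_on with
  | _ i IH =>
    intro hi1 him
    have hconfi : ∀ a : A, |μhat i a - μ i a| ≤ C := hconf i hi1 him
    -- key : astar nearly maximizes μhat i on S (i-1)
    have key : ∀ b ∈ S (i - 1),
        μhat i b - μhat i astar ≤ (2 + 4 * ∑ j ∈ Finset.Ico 1 i, lam ^ j) * C := by
      intro b hb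
      have h1 : μhat i b - μ i b ≤ C := (abs_le.1 (hconfi b)).2
      have h2 : μ i astar - μhat i astar ≤ C := by
        have := (abs_le.1 (hconfi astar)).1; linarith
      rcases Nat.eq_or_lt_of_le hi1 with h | h
      · -- i = 1
        subst h
        have h3 : μ 1 b ≤ μ 1 astar := hopt1 b
        simp only [Finset.Ico_self, Finset.sum_empty]
        linarith
      · -- 2 ≤ i
        have hi2 : 2 ≤ i := h
        have htr := htrade i hi2 him b
        have hsup : (Finset.Icc 1 (i - 1)).sup'
            (Finset.nonempty_Icc.mpr (by omega)) (fun j => μ j astar - μ j b)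
            ≤ 4 * (∑ j ∈ Finset.range (i - 1), lam ^ j) * C := by
          apply Finset.sup'_le
          intro j hj
          rw [Finset.mem_Icc] at hj
          have hbj : b ∈ S j := hnest (i - 1) (by omega) j hj.2 b hb
          have hgap := (IH j (by omega) hj.1 (by omega)).2 b hbj
          have hmono : (∑ k ∈ Finset.range j, lam ^ k) ≤
              ∑ k ∈ Finset.range (i - 1), lam ^ k := by
            apply Finset.sum_le_sum_of_subset_of_nonneg
            · exact Finset.range_subset_range.2 hj.2
            · intro k _ _; positivity
          nlinarith
        have hgeom : lam * ∑ j ∈ Finset.range (i - 1), lam ^ j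
            = ∑ j ∈ Finset.Ico 1 i, lam ^ j := by
          rw [Finset.sum_Ico_eq_sum_range, Finset.mul_sum]
          apply Finset.sum_congr rfl
          intro k _
          rw [pow_add, pow_one]
        have hmul : lam * ((Finset.Icc 1 (i - 1)).sup'
            (Finset.nonempty_Icc.mpr (by omega)) (fun j => μ j astar - μ j b))
            ≤ lam * (4 * (∑ j ∈ Finset.range (i - 1), lam ^ j) * C) :=
          mul_le_mul_of_nonneg_left hsup hlam
        have heq : lam * (4 * (∑ j ∈ Finset.range (i - 1), lam ^ j) * C)
            = 4 * (∑ j ∈ Finset.Ico 1 i, lam ^ j) * C := by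
          rw [← hgeom]; ring
        have hfin : 4 * (∑ j ∈ Finset.Ico 1 i, lam ^ j) * C
            = (2 + 4 * ∑ j ∈ Finset.Ico 1 i, lam ^ j) * C - 2 * C := by ring
        linarith
    have hastar_prev : astar ∈ S (i - 1) := by
      rcases Nat.eq_or_lt_of_le hi1 with h | h
      · subst h; simp [hS0]
      · exact (IH (i - 1) (by omega) (by omega) (by omega)).1
    have hastar : astar ∈ S i := (hSrec i hi1 him astar).2 ⟨hastar_prev, key⟩
    refine ⟨hastar, ?_⟩
    intro a ha
    obtain ⟨ha_prev, hcond⟩ := (hSrec i hi1 him a).1 ha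
    have hbound := hcond astar hastar_prev
    have h1 : μ i astar - μhat i astar ≤ C := by
      have := (abs_le.1 (hconfi astar)).1; linarith
    have h2 : μhat i a - μ i a ≤ C := (abs_le.1 (hconfi a)).2
    have hsplit : (∑ j ∈ Finset.range i, lam ^ j)
        = 1 + ∑ j ∈ Finset.Ico 1 i, lam ^ j := by
      rw [Finset.range_eq_Ico, Finset.sum_eq_sum_Ico_succ_bot (by omega : 0 < i)]
      simp
    rw [hsplit]
    have heq : 4 * (1 + ∑ j ∈ Finset.Ico 1 i, lam ^ j) * C
        = (2 + 4 * ∑ j ∈ Finset.Ico 1 i, lam ^ j) * C + 2 * C := by ring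
    linarith
end

section
/- Let K ≥ 1 and t ≥ 1 be integers and Λ ≥ 0, L ≥ 0 reals. Let a : {1,…,t} → Fin K be a sequence of arm pulls, and for each τ ∈ {1,…,t} let n(τ) = |{σ ∈ {1,…,τ} : a(σ) = a(τ)}| ≥ 1 be the running pull count of the arm pulled at round τ (including round τ). Let Δ : Fin K → ℝ satisfy Δ(a(τ)) ≤ 8·Λ·√(L/n(τ)) for every τ ∈ {1,…,t}. Then the sum over τ ∈ {1,…,t} of Δ(a(τ)) is at most 16·Λ·√(K·t·L). -/
lemma aux_sum_inv_sqrt (T : ℕ) :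
    ∑ s ∈ Finset.Icc 1 T, (Real.sqrt s)⁻¹ ≤ 2 * Real.sqrt T := by
  induction T with
  | zero => simp
  | succ T ih =>
    rw [Finset.sum_Icc_succ_top (by omega)]
    have hy : (0:ℝ) < Real.sqrt ((T:ℝ)+1) := Real.sqrt_pos.2 (by positivity)
    have h1 : (Real.sqrt ((T:ℝ)+1))⁻¹ ≤ 2*Real.sqrt ((T:ℝ)+1) - 2*Real.sqrt T := by
      rw [inv_le_iff_one_le_mul₀ hy]
      nlinarith [Real.sq_sqrt (show (0:ℝ) ≤ T by positivity),
        Real.sq_sqrt (show (0:ℝ) ≤ (T:ℝ)+1 by positivity),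
        sq_nonneg (Real.sqrt ((T:ℝ)+1) - Real.sqrt T), Real.sqrt_nonneg (T:ℝ)]
    push_cast
    linarith

/-- Deterministic core of Corollary 1 (minimax regret of LexElim-In): if at every
round `τ ∈ {1,…,t}` the gap of the pulled arm satisfies
`Δ(a(τ)) ≤ 8 Λ √(L / n(τ))`, where `n(τ)` is the running pull count of that arm,
then `∑_{τ=1}^{t} Δ(a(τ)) ≤ 16 Λ √(K t L)`. -/
theorem stmt_11 (K t : ℕ) (hK : 1 ≤ K) (ht : 1 ≤ t)
    (Λ L : ℝ) (hΛ : 0 ≤ Λ) (hL : 0 ≤ L)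
    (a : ℕ → Fin K) (n : ℕ → ℕ)
    (hn : ∀ τ ∈ Finset.Icc 1 t,
      n τ = ((Finset.Icc 1 τ).filter (fun σ => a σ = a τ)).card)
    (Δ : Fin K → ℝ)
    (hΔ : ∀ τ ∈ Finset.Icc 1 t, Δ (a τ) ≤ 8 * Λ * Real.sqrt (L / n τ)) :
    ∑ τ ∈ Finset.Icc 1 t, Δ (a τ) ≤ 16 * Λ * Real.sqrt (K * t * L) := by
  classical
  set S : Fin K → Finset ℕ := fun i => (Finset.Icc 1 t).filter (fun τ => a τ = i) with hS
  -- fiber bound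
  have hfiber : ∀ i : Fin K,
      ∑ τ ∈ S i, (Real.sqrt (n τ))⁻¹ ≤ 2 * Real.sqrt ((S i).card) := by
    intro i
    have hmem : ∀ τ ∈ S i, τ ∈ Finset.Icc 1 t ∧ a τ = i := by
      intro τ hτ; simpa [hS, Finset.mem_filter] using hτ
    have hmono : ∀ τ ∈ S i, ∀ τ' ∈ S i, τ < τ' → n τ < n τ' := by
      intro τ hτ τ' hτ' hlt
      obtain ⟨hτI, hτa⟩ := hmem τ hτ
      obtain ⟨hτ'I, hτ'a⟩ := hmem τ' hτ'
      rw [hn τ hτI, hn τ' hτ'I]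
      simp only [hτa, hτ'a]
      apply Finset.card_lt_card
      constructor
      · apply Finset.filter_subset_filter
        exact Finset.Icc_subset_Icc_right (le_of_lt hlt)
      · intro hsub
        have : τ' ∈ (Finset.Icc 1 τ).filter (fun σ => a σ = i) := by
          apply hsub
          simp only [Finset.mem_filter, Finset.mem_Icc]
          exact ⟨⟨(Finset.mem_Icc.1 hτ'I).1, le_rfl⟩, hτ'a⟩
        simp only [Finset.mem_filter, Finset.mem_Icc] at this
        omega
    have hinj : Set.InjOn n (S i) := by
      intro x hx y hy hxy
      by_contra hne
      rcases lt_or_gt_of_ne hne with h | h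
      · exact absurd hxy (Nat.ne_of_lt (hmono x hx y hy h))
      · exact absurd hxy.symm (Nat.ne_of_lt (hmono y hy x hx h))
    have himg : ∀ τ ∈ S i, n τ ∈ Finset.Icc 1 (S i).card := by
      intro τ hτ
      obtain ⟨hτI, hτa⟩ := hmem τ hτ
      obtain ⟨h1τ, hτt⟩ := Finset.mem_Icc.1 hτI
      rw [Finset.mem_Icc, hn τ hτI]
      constructor
      · rw [Nat.one_le_iff_ne_zero, ← Nat.pos_iff_ne_zero, Finset.card_pos]
        exact ⟨τ, by simp [Finset.mem_Icc, h1τ]⟩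
      · apply Finset.card_le_card
        intro σ hσ
        simp only [Finset.mem_filter, Finset.mem_Icc] at hσ
        simp only [hS, Finset.mem_filter, Finset.mem_Icc]
        exact ⟨⟨hσ.1.1, le_trans hσ.1.2 hτt⟩, hσ.2.trans hτa⟩
    calc ∑ τ ∈ S i, (Real.sqrt (n τ))⁻¹
        = ∑ m ∈ (S i).image n, (Real.sqrt m)⁻¹ := (Finset.sum_image (f := fun m : ℕ => (Real.sqrt m)⁻¹) (fun x hx y hy => hinj hx hy)).symm
      _ ≤ ∑ m ∈ Finset.Icc 1 (S i).card, (Real.sqrt m)⁻¹ := by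
          apply Finset.sum_le_sum_of_subset_of_nonneg
          · intro m hm
            obtain ⟨τ, hτ, rfl⟩ := Finset.mem_image.1 hm
            exact himg τ hτ
          · intro m _ _; positivity
      _ ≤ 2 * Real.sqrt ((S i).card) := aux_sum_inv_sqrt _
  -- total count
  have hcount : ∑ i : Fin K, ((S i).card : ℝ) = t := by
    have := Finset.card_eq_sum_card_fiberwise
      (f := a) (s := Finset.Icc 1 t) (t := Finset.univ) (fun x _ => Finset.mem_univ _)
    rw [Nat.card_Icc] at this
    push_cast [hS]
    rw_mod_cast [← this]
    simp
  -- Cauchy-Schwarz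
  have hCS : ∑ i : Fin K, Real.sqrt ((S i).card) ≤ Real.sqrt (K * t) := by
    have h1 : (∑ i : Fin K, Real.sqrt ((S i).card))^2 ≤ (K : ℝ) * t := by
      calc (∑ i : Fin K, Real.sqrt ((S i).card))^2
          ≤ (Finset.univ : Finset (Fin K)).card * ∑ i : Fin K, Real.sqrt ((S i).card)^2 :=
            sq_sum_le_card_mul_sum_sq
        _ = (K : ℝ) * t := by
            rw [Finset.card_univ, Fintype.card_fin]
            congr 1
            rw [← hcount]
            exact Finset.sum_congr rfl fun i _ => Real.sq_sqrt (by positivity)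
    have h2 : (0:ℝ) ≤ ∑ i : Fin K, Real.sqrt ((S i).card) :=
      Finset.sum_nonneg fun i _ => Real.sqrt_nonneg _
    exact Real.le_sqrt_of_sq_le h1
  -- assemble
  have hsum : ∑ τ ∈ Finset.Icc 1 t, (Real.sqrt (n τ))⁻¹ ≤ 2 * Real.sqrt ((K:ℝ) * t) := by
    rw [← Finset.sum_fiberwise (Finset.Icc 1 t) a (fun τ => (Real.sqrt (n τ))⁻¹)]
    calc ∑ i : Fin K, ∑ τ ∈ S i, (Real.sqrt (n τ))⁻¹
        ≤ ∑ i : Fin K, 2 * Real.sqrt ((S i).card) :=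
          Finset.sum_le_sum fun i _ => hfiber i
      _ = 2 * ∑ i : Fin K, Real.sqrt ((S i).card) := by rw [Finset.mul_sum]
      _ ≤ 2 * Real.sqrt ((K:ℝ) * t) := by linarith [hCS]
  calc ∑ τ ∈ Finset.Icc 1 t, Δ (a τ)
      ≤ ∑ τ ∈ Finset.Icc 1 t, 8 * Λ * Real.sqrt (L / n τ) := Finset.sum_le_sum hΔ
    _ = 8 * Λ * Real.sqrt L * ∑ τ ∈ Finset.Icc 1 t, (Real.sqrt (n τ))⁻¹ := by
        rw [Finset.mul_sum]
        refine Finset.sum_congr rfl fun τ _ => ?_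
        rw [Real.sqrt_div hL, div_eq_mul_inv]
        ring
    _ ≤ 8 * Λ * Real.sqrt L * (2 * Real.sqrt ((K:ℝ) * t)) := by
        apply mul_le_mul_of_nonneg_left hsum (by positivity)
    _ = 16 * Λ * (Real.sqrt ((K:ℝ) * t) * Real.sqrt L) := by ring
    _ = 16 * Λ * Real.sqrt (K * t * L) := by
        rw [← Real.sqrt_mul (by positivity)]
end
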